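/- arXiv:2510.26968 — 3 statements merged into one kernel-verified Lean document; each statement's English description precedes it below -/
import Mathlib

section
/- Let β > 0 and G ∈ (0,1) with β·G > 1. Define f(τ) = max{ G·(1+τβ)/(G+τ), G·(2+τβ)/(G+2τ), (2+τβ)/(1+τβ) } for τ ∈ [0, 1−G]. If β·G ≥ 4, then f(τ) ≥ 2 for all τ ∈ [0,1−G], and f(0) = 2. -/
theorem nextfit_tau_large_betaG (β G : ℝ) (hβ : 0 < β) (hG0 : 0 < G) (hG1 : G < 1)
    (hβG : 1 < β * G) (h4 : 4 ≤ β * G) :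
    (∀ τ : ℝ, 0 ≤ τ → τ ≤ 1 - G →
      2 ≤ max (max (G * (1 + τ * β) / (G + τ)) (G * (2 + τ * β) / (G + 2 * τ)))
            ((2 + τ * β) / (1 + τ * β))) ∧
    max (max (G * (1 + 0 * β) / (G + 0)) (G * (2 + 0 * β) / (G + 2 * 0)))
        ((2 + 0 * β) / (1 + 0 * β)) = 2 := by
  constructor
  · intro τ hτ0 hτ1
    refine le_max_of_le_left (le_max_of_le_right ?_)
    have hden : 0 < G + 2 * τ := by linarith
    rw [le_div_iff₀ hden]
    nlinarith [mul_nonneg hτ0 (sub_nonneg.mpr h4)]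
  · have h1 : G * (1 + 0 * β) / (G + 0) = 1 := by
      field_simp
      ring
    have h2 : G * (2 + 0 * β) / (G + 2 * 0) = 2 := by
      field_simp
      ring
    have h3 : (2 + 0 * β) / (1 + 0 * β) = 2 := by norm_num
    rw [h1, h2, h3]; norm_num
end

section
/- Let β > 0, G > 0. The function μ₁(R) = ((1 − Gβ − 2Rβ) + √((Gβ + 2Rβ − 1)² + 4β(G − 2R)))/(2β) is non-increasing in R on [0, G/2] whenever β·G > 1. -/
theorem mu1_antitone (β G : ℝ) (hβ : 0 < β) (hG : 0 < G) (hβG : 1 < β * G) :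
    AntitoneOn (fun R : ℝ => ((1 - G * β - 2 * R * β) +
        Real.sqrt ((G * β + 2 * R * β - 1) ^ 2 + 4 * β * (G - 2 * R))) / (2 * β))
      (Set.Icc 0 (G / 2)) := by
  intro R₁ hR₁ R₂ hR₂ hle
  simp only
  set I₁ := (G * β + 2 * R₁ * β - 1) ^ 2 + 4 * β * (G - 2 * R₁) with hI₁def
  set I₂ := (G * β + 2 * R₂ * β - 1) ^ 2 + 4 * β * (G - 2 * R₂) with hI₂def
  set d := 2 * β * (R₂ - R₁) with hd
  have hd0 : 0 ≤ d := by
    have := hle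
    nlinarith
  have hslb : G * β + 2 * R₁ * β - 1 - 2 ≤ Real.sqrt I₁ := by
    have h1 : (G * β + 2 * R₁ * β - 1 - 2) ^ 2 ≤ I₁ := by
      have : β * G - 1 > 0 := by linarith
      nlinarith
    calc G * β + 2 * R₁ * β - 1 - 2 ≤ |G * β + 2 * R₁ * β - 1 - 2| := le_abs_self _
      _ = Real.sqrt ((G * β + 2 * R₁ * β - 1 - 2) ^ 2) := (Real.sqrt_sq_eq_abs _).symm
      _ ≤ Real.sqrt I₁ := Real.sqrt_le_sqrt h1
  have hsq1 : 0 ≤ Real.sqrt I₁ := Real.sqrt_nonneg _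
  have hkey : Real.sqrt I₂ ≤ Real.sqrt I₁ + d := by
    have hI₁ : 0 ≤ I₁ := by
      rw [hI₁def]; nlinarith [sq_nonneg (G * β + 2 * R₁ * β - 3)]
    have h2 : I₂ ≤ (Real.sqrt I₁ + d) ^ 2 := by
      have hsq : Real.sqrt I₁ ^ 2 = I₁ := Real.sq_sqrt hI₁
      nlinarith [mul_le_mul_of_nonneg_left hslb hd0]
    calc Real.sqrt I₂ ≤ Real.sqrt ((Real.sqrt I₁ + d) ^ 2) := Real.sqrt_le_sqrt h2
      _ = Real.sqrt I₁ + d := by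
          rw [Real.sqrt_sq (by linarith)]
  have h2β : (0:ℝ) < 2 * β := by linarith
  have hnum : (1 - G * β - 2 * R₂ * β) + Real.sqrt I₂ ≤
      (1 - G * β - 2 * R₁ * β) + Real.sqrt I₁ := by
    have : 2 * R₂ * β - 2 * R₁ * β = d := by rw [hd]; ring
    linarith
  exact (div_le_div_iff_of_pos_right h2β).mpr hnum
end

section
/- Let β > 0, G ∈ (0,1) with β·G > 1, and τ ∈ (0, 1−G]. Then βτ² + τ·(Gβ + 2Rβ − 1) + (2R − G) = 0 has exactly one positive root for every R ∈ [0, G/2), namely μ₁(R) = ((1 − Gβ − 2Rβ) + √((Gβ+2Rβ−1)² + 4β(G−2R)))/(2β), and at τ = μ₁(R) the equality (G+R)(1+τβ)/(G+τ) = 1 + (G−τ)(1+τβ)/(2(G+τ)) holds. -/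
theorem mu1_unique_root_and_trace (β G : ℝ) (hβ : 0 < β) (hG0 : 0 < G)
    (hG1 : G < 1) (hβG : 1 < β * G) :
    ∀ R : ℝ, 0 ≤ R → R < G / 2 →
      (∃! t : ℝ, 0 < t ∧
        β * t ^ 2 + t * (G * β + 2 * R * β - 1) + (2 * R - G) = 0) ∧
      (let μ := ((1 - G * β - 2 * R * β) +
          Real.sqrt ((G * β + 2 * R * β - 1) ^ 2 + 4 * β * (G - 2 * R))) / (2 * β);
        0 < μ ∧
        β * μ ^ 2 + μ * (G * β + 2 * R * β - 1) + (2 * R - G) = 0 ∧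
        (G + R) * (1 + μ * β) / (G + μ) =
          1 + (G - μ) * (1 + μ * β) / (2 * (G + μ))) := by
  intro R hR0 hR
  set b := G * β + 2 * R * β - 1 with hb
  set D := b ^ 2 + 4 * β * (G - 2 * R) with hD
  have hG2R : 0 < G - 2 * R := by linarith
  have hDpos : b ^ 2 < D := by
    have : 0 < 4 * β * (G - 2 * R) := by positivity
    linarith
  have hD0 : 0 ≤ D := le_trans (sq_nonneg b) hDpos.le
  set s := Real.sqrt D with hs
  have hs2 : s ^ 2 = D := Real.sq_sqrt hD0
  have hsb : |b| < s := by
    have h1 : |b| ^ 2 < s ^ 2 := by rw [hs2, sq_abs]; exact hDpos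
    have h2 : 0 ≤ s := Real.sqrt_nonneg _
    nlinarith [abs_nonneg b]
  have hsgtb : -b < s := lt_of_le_of_lt (neg_le_abs b) hsb
  have hsgtb' : b < s := lt_of_le_of_lt (le_abs_self b) hsb
  set μ := ((1 - G * β - 2 * R * β) + s) / (2 * β) with hμ
  have h2βμ : 2 * β * μ = -b + s := by
    rw [hμ, hb]; field_simp; ring
  have hμpos : 0 < μ := by
    rw [hμ]
    apply div_pos (by rw [hb] at hsgtb; linarith) (by linarith)
  have hroot4 : 4 * β * (β * μ ^ 2 + μ * b + (2 * R - G)) = 0 := by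
    linear_combination (2 * β * μ + (-b + s) + 2 * b) * h2βμ + hs2 + hD
  have hroot : β * μ ^ 2 + μ * b + (2 * R - G) = 0 := by
    have h4 : (4 : ℝ) * β ≠ 0 := by positivity
    exact (mul_eq_zero.1 hroot4).resolve_left h4
  refine ⟨⟨μ, ⟨hμpos, hroot⟩, ?_⟩, hμpos, hroot, ?_⟩
  · rintro t ⟨ht0, hteq⟩
    have hfact : (2 * β * t - (-b + s)) * (2 * β * t - (-b - s)) = 0 := by
      linear_combination 4 * β * hteq - hs2 + hD
    rcases mul_eq_zero.1 hfact with h | h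
    · have h2βt : 2 * β * t = -b + s := by linarith
      have : 2 * β * t = 2 * β * μ := by rw [h2βμ, h2βt]
      have hβ2 : (2 : ℝ) * β ≠ 0 := by positivity
      exact mul_left_cancel₀ hβ2 this
    · exfalso
      have : 2 * β * t = -b - s := by linarith
      have hpos : 0 < 2 * β * t := by positivity
      have hsnn : 0 ≤ s := Real.sqrt_nonneg _
      nlinarith
  · have hGμ : G + μ ≠ 0 := by positivity
    rw [div_eq_iff hGμ]
    have h2Gμ : 2 * (G + μ) ≠ 0 := by positivity
    clear_value μ s D b
    subst hb
    field_simp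
    linear_combination hroot
end
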